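/- Let 𝒜 be an abelian category and 𝒯 a full subcategory. Consider the assertions: (1) 𝒯 = V^{⊥1} for some object V that is Ext^1-universal in 𝒜 and satisfies V^{(I)} ∈ V^{⊥1} for every set I for which the coproduct V^{(I)} exists in 𝒜; (2) 𝒯 is special preenveloping in 𝒜 and is closed under extensions and direct summands; (3) (^{⊥1}𝒯, 𝒯) is a right complete cotorsion pair in 𝒜. Then (1) implies (2), and (2) and (3) are equivalent. If in addition 𝒜 has an epi-generator and 𝒯 is closed under coproducts and quotients (for example, if 𝒯 is a torsion class), then all three assertions are equivalent. -/

import Mathlib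

/-!
Common definitions for formalizing results of "Tilting preenvelopes and cotilting
precovers in general Abelian categories" (Parra–Saorín–Virili).

Conventions:
* Full subcategories of an abelian category `C` are encoded as `Set C`.
* "Sets" (index sets of families, coproducts, …) are encoded as types in the universe `v`
  of the morphisms of `C`.
* `Ext¹(X,Y) = 0` is encoded via the splitting of all short exact sequences
  `0 → Y → E → X → 0` (equivalently, the vanishing of the Yoneda Ext group).
* Relative (`…In B`) notions encode the corresponding notion computed inside the
  full (abelian exact) subcategory determined by `B : Set C`; the ambient case is
  `B = Set.univ`.
* Coproducts are not assumed to exist: a coproduct of a family existing in the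
  (sub)category is encoded by a cocone with the universal property (`IsCoproductIn`).
-/

open CategoryTheory CategoryTheory.Limits

universe w v u

attribute [local instance] CategoryTheory.Abelian.hasFiniteBiproducts

namespace Paper

variable {C : Type u} [Category.{v} C] [Abelian C]

/-- `(i, p)` is a short exact sequence `0 ⟶ A ⟶ E ⟶ B ⟶ 0` in `C`. -/
def IsShortExact {A E B : C} (i : A ⟶ E) (p : E ⟶ B) : Prop :=
  ∃ hw : i ≫ p = 0, (ShortComplex.mk i p hw).ShortExact

/-- `Q`, together with the injections `ι`, is the coproduct of the family `f`
inside the full subcategory determined by `B`. -/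
structure IsCoproductIn (B : Set C) {I : Type v} (f : I → C) (Q : C)
    (ι : ∀ i, f i ⟶ Q) : Prop where
  mem : ∀ i, f i ∈ B
  memQ : Q ∈ B
  desc : ∀ Z ∈ B, ∀ g : (∀ i, f i ⟶ Z), ∃! h : Q ⟶ Z, ∀ i, ι i ≫ h = g i

/-- `Ext¹(X, Y) = 0`, computed in the full subcategory determined by `B`:
every short exact sequence `0 → Y → E → X → 0` with `E ∈ B` splits. -/
def Ext1ZeroIn (B : Set C) (X Y : C) : Prop :=
  ∀ E ∈ B, ∀ (i : Y ⟶ E) (p : E ⟶ X), IsShortExact i p → ∃ r : E ⟶ Y, i ≫ r = 𝟙 Y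

/-- `Ext¹(X, Y) = 0` in the ambient abelian category. -/
def Ext1Zero (X Y : C) : Prop := Ext1ZeroIn Set.univ X Y

/-- `V^{⊥₁}`, computed in (the full subcategory determined by) `B`. -/
def rightPerp (B : Set C) (V : C) : Set C := {A ∈ B | Ext1ZeroIn B V A}

/-- `^{⊥₁}T`, computed in `B`. -/
def leftPerpSet (B T : Set C) : Set C := {A ∈ B | ∀ X ∈ T, Ext1ZeroIn B A X}

/-- `T^{⊥₁}`, computed in `B`. -/
def rightPerpSet (B T : Set C) : Set C := {A ∈ B | ∀ X ∈ T, Ext1ZeroIn B X A}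

/-- `Sub(X)` relative to `B`: objects of `B` admitting a monomorphism into an object of `X`. -/
def subIn (B X : Set C) : Set C := {A ∈ B | ∃ T ∈ X, ∃ f : A ⟶ T, Mono f}

/-- `Quot(X)` relative to `B`: objects of `B` which are epimorphic images of objects of `X`. -/
def quotIn (B X : Set C) : Set C := {A ∈ B | ∃ T ∈ X, ∃ f : T ⟶ A, Epi f}

/-- `(T, F)` is a torsion pair in (the full subcategory determined by) `B`. -/
structure IsTorsionPairIn (B T F : Set C) : Prop where
  eqF : F = {A ∈ B | ∀ X ∈ T, ∀ f : X ⟶ A, f = 0}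
  eqT : T = {A ∈ B | ∀ Y ∈ F, ∀ f : A ⟶ Y, f = 0}
  seq : ∀ A ∈ B, ∃ (X Y : C) (i : X ⟶ A) (p : A ⟶ Y), X ∈ T ∧ Y ∈ F ∧ IsShortExact i p

/-- `T` is a torsion class in `B`. -/
def IsTorsionClassIn (B T : Set C) : Prop := ∃ F, IsTorsionPairIn B T F

/-- `F` is a torsion-free class in `B`. -/
def IsTorsionFreeClassIn (B F : Set C) : Prop := ∃ T, IsTorsionPairIn B T F

/-- `φ : M ⟶ X` is a `T`-preenvelope. -/
structure IsPreenvelope (T : Set C) {M X : C} (φ : M ⟶ X) : Prop where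
  mem : X ∈ T
  fac : ∀ T' ∈ T, ∀ g : M ⟶ T', ∃ h : X ⟶ T', φ ≫ h = g

/-- `φ` is a semi-special `T`-preenvelope (relative to `B`):
a `T`-preenvelope whose cokernel lies in `^{⊥₁}T` (computed in `B`). -/
def IsSemiSpecialPreenvelopeIn (B T : Set C) {M X : C} (φ : M ⟶ X) : Prop :=
  IsPreenvelope T φ ∧ cokernel φ ∈ leftPerpSet B T

/-- `φ` is a special `T`-preenvelope (relative to `B`). -/
def IsSpecialPreenvelopeIn (B T : Set C) {M X : C} (φ : M ⟶ X) : Prop :=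
  Mono φ ∧ IsSemiSpecialPreenvelopeIn B T φ

/-- `T` is preenveloping in `B`. -/
def PreenvelopingIn (B T : Set C) : Prop :=
  ∀ M ∈ B, ∃ (X : C) (φ : M ⟶ X), IsPreenvelope T φ

/-- `T` is semi-special preenveloping in `B`. -/
def SemiSpecialPreenvelopingIn (B T : Set C) : Prop :=
  ∀ M ∈ B, ∃ (X : C) (φ : M ⟶ X), IsSemiSpecialPreenvelopeIn B T φ

/-- `T` is special preenveloping in `B`. -/
def SpecialPreenvelopingIn (B T : Set C) : Prop :=
  ∀ M ∈ B, ∃ (X : C) (φ : M ⟶ X), IsSpecialPreenvelopeIn B T φ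

/-- `φ : X ⟶ M` is a `T`-precover. -/
structure IsPrecover (T : Set C) {X M : C} (φ : X ⟶ M) : Prop where
  mem : X ∈ T
  fac : ∀ T' ∈ T, ∀ g : T' ⟶ M, ∃ h : T' ⟶ X, h ≫ φ = g

/-- `φ` is a semi-special `T`-precover (relative to `B`):
a `T`-precover whose kernel lies in `T^{⊥₁}` (computed in `B`). -/
def IsSemiSpecialPrecoverIn (B T : Set C) {X M : C} (φ : X ⟶ M) : Prop :=
  IsPrecover T φ ∧ kernel φ ∈ rightPerpSet B T

/-- `T` is precovering in `B`. -/
def PrecoveringIn (B T : Set C) : Prop :=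
  ∀ M ∈ B, ∃ (X : C) (φ : X ⟶ M), IsPrecover T φ

/-- `T` is semi-special precovering in `B`. -/
def SemiSpecialPrecoveringIn (B T : Set C) : Prop :=
  ∀ M ∈ B, ∃ (X : C) (φ : X ⟶ M), IsSemiSpecialPrecoverIn B T φ

/-- `Add(V)` relative to `B`: direct summands of coproducts (existing in `B`)
of copies of `V`. -/
def addIn (B : Set C) (V : C) : Set C :=
  {A ∈ B | ∃ (I : Type v) (Q : C) (ι : ∀ _ : I, V ⟶ Q),
     IsCoproductIn B (fun _ : I => V) Q ι ∧ ∃ (s : A ⟶ Q) (r : Q ⟶ A), s ≫ r = 𝟙 A}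

/-- `Gen(V)` relative to `B`: quotients of objects of `Add(V)`. -/
def genIn (B : Set C) (V : C) : Set C :=
  {A ∈ B | ∃ X ∈ addIn B V, ∃ p : X ⟶ A, Epi p}

/-- `Pres(V)` relative to `B`: cokernels of morphisms between objects of `Add(V)`. -/
def presIn (B : Set C) (V : C) : Set C :=
  {A ∈ B | ∃ X ∈ addIn B V, ∃ Y ∈ addIn B V,
     ∃ (f : X ⟶ Y) (c : Y ⟶ A) (hw : f ≫ c = 0), Epi c ∧ (ShortComplex.mk f c hw).Exact}

/-- `Ḡen(V) = Sub(Gen(V))` relative to `B`. -/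
def barGenIn (B : Set C) (V : C) : Set C := subIn B (genIn B V)

/-- The class `X` is cogenerating in `B`. -/
def CogeneratingIn (B X : Set C) : Prop := ∀ A ∈ B, ∃ T ∈ X, ∃ f : A ⟶ T, Mono f

/-- The class `X` is generating in `B`. -/
def GeneratingIn (B X : Set C) : Prop := ∀ A ∈ B, ∃ T ∈ X, ∃ f : T ⟶ A, Epi f

/-- `V` is a quasi-tilting object of (the full subcategory determined by) `B`:
`Gen(V)` is a torsion class and `Gen(V) = Pres(V) = Ḡen(V) ∩ V^{⊥₁}`. -/
def IsQuasiTiltingIn (B : Set C) (V : C) : Prop :=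
  V ∈ B ∧ IsTorsionClassIn B (genIn B V) ∧ genIn B V = presIn B V ∧
    genIn B V = barGenIn B V ∩ rightPerp B V

/-- `V` is a tilting object of `B`: quasi-tilting with `Gen(V)` cogenerating. -/
def IsTiltingIn (B : Set C) (V : C) : Prop :=
  IsQuasiTiltingIn B V ∧ CogeneratingIn B (genIn B V)

/-- `G` is an epi-generator of `B`: every object of `B` is an epimorphic image of a
coproduct (existing in `B`) of copies of `G`. -/
def IsEpiGeneratorIn (B : Set C) (G : C) : Prop :=
  G ∈ B ∧ ∀ A ∈ B, ∃ (I : Type v) (Q : C) (ι : ∀ _ : I, G ⟶ Q),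
    IsCoproductIn B (fun _ : I => G) Q ι ∧ ∃ p : Q ⟶ A, Epi p

/-- `0 → A —u→ X → V^{(J)} → 0` is a universal extension of `V` by `A` (relative to `B`):
the right end of the sequence is a nonempty coproduct of copies of `V` existing in `B`,
and the induced map `Ext¹(V,A) → Ext¹(V,X)` is zero (encoded: for every extension
`0 → A —i→ E → V → 0` with `E ∈ B`, its pushout along `u` splits, i.e. `u` extends
along `i`). -/
def IsUniversalExtensionIn (B : Set C) (V A X : C) (u : A ⟶ X) : Prop :=
  A ∈ B ∧ X ∈ B ∧
  (∃ (J : Type v) (_ : Nonempty J) (P : C) (κ : ∀ _ : J, V ⟶ P) (p : X ⟶ P),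
     IsCoproductIn B (fun _ : J => V) P κ ∧ IsShortExact u p) ∧
  (∀ E ∈ B, ∀ (i : A ⟶ E) (q : E ⟶ V), IsShortExact i q → ∃ ψ : E ⟶ X, i ≫ ψ = u)

/-- `V` is `Ext¹`-universal in `B`: universal extensions of `V` by every object exist. -/
def IsExt1UniversalIn (B : Set C) (V : C) : Prop :=
  ∀ A ∈ B, ∃ (X : C) (u : A ⟶ X), IsUniversalExtensionIn B V A X u

/-- `(X, Y)` is a cotorsion pair in (the full subcategory determined by) `B`. -/
def IsCotorsionPairIn (B X Y : Set C) : Prop :=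
  Y = {A ∈ B | ∀ Z ∈ X, Ext1ZeroIn B Z A} ∧
  X = {A ∈ B | ∀ Z ∈ Y, Ext1ZeroIn B A Z}

/-- The pair `(X, Y)` is right complete in `B`: every `A ∈ B` admits a short exact
sequence `0 → A → Y' → X' → 0` with `Y' ∈ Y`, `X' ∈ X`. -/
def RightCompleteIn (B X Y : Set C) : Prop :=
  ∀ A ∈ B, ∃ (Y' X' : C) (i : A ⟶ Y') (p : Y' ⟶ X'), Y' ∈ Y ∧ X' ∈ X ∧ IsShortExact i p

/-- The pair `(X, Y)` is left complete in `B`: every `A ∈ B` admits a short exact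
sequence `0 → Y' → X' → A → 0` with `Y' ∈ Y`, `X' ∈ X`. -/
def LeftCompleteIn (B X Y : Set C) : Prop :=
  ∀ A ∈ B, ∃ (Y' X' : C) (i : Y' ⟶ X') (p : X' ⟶ A), Y' ∈ Y ∧ X' ∈ X ∧ IsShortExact i p

/-- The full subcategory determined by `B` is reflective in `C`:
the (fully faithful) inclusion functor has a left adjoint. -/
def IsReflectiveSub (B : Set C) : Prop :=
  (ObjectProperty.ι (· ∈ B)).IsRightAdjoint

/-- The full subcategory determined by `B` is coreflective in `C`:
the inclusion functor has a right adjoint. -/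
def IsCoreflectiveSub (B : Set C) : Prop :=
  (ObjectProperty.ι (· ∈ B)).IsLeftAdjoint

/-- `Ext²(V, A) = 0` (Yoneda `Ext²`): every `2`-fold extension
`0 → A —g→ X₁ —f→ X₀ —p→ V → 0` represents the trivial class, i.e. (by the standard
long-exact-sequence criterion) the extension `0 → A → X₁ → im f → 0` extends to an
extension of `X₀` by `A`. -/
def Ext2Zero (V A : C) : Prop :=
  ∀ (X1 X0 : C) (g : A ⟶ X1) (f : X1 ⟶ X0) (p : X0 ⟶ V)
    (w1 : g ≫ f = 0) (w2 : f ≫ p = 0),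
    Mono g → Epi p → (ShortComplex.mk g f w1).Exact → (ShortComplex.mk f p w2).Exact →
    ∃ (Y : C) (a : A ⟶ Y) (b : Y ⟶ X0), IsShortExact a b ∧
      ∃ φ : X1 ⟶ Y, g ≫ φ = a ∧ φ ≫ b = f

/-- `V` has projective dimension at most `1`: `Ext²(V, A) = 0` for every `A`. -/
def ProjDimLE1 (V : C) : Prop := ∀ A : C, Ext2Zero V A

/-- The "elements" of the (possibly large) Yoneda `Ext¹(X, Y)`: short exact sequences
`0 → Y → E → X → 0`. -/
def ExtElem (X Y : C) : Type (max u v) :=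
  Σ' (E : C) (i : Y ⟶ E) (p : E ⟶ X), IsShortExact i p

/-- Yoneda equivalence of extensions. -/
def extRel (X Y : C) : ExtElem X Y → ExtElem X Y → Prop :=
  fun e₁ e₂ => ∃ φ : e₁.1 ⟶ e₂.1, e₁.2.1 ≫ φ = e₂.2.1 ∧ φ ≫ e₂.2.2.1 = e₁.2.2.1

/-- The (possibly large) Yoneda `Ext¹(X, Y)`, as the quotient of the collection
of extensions by Yoneda equivalence. -/
def ExtClass (X Y : C) : Type (max u v) := Quot (extRel X Y)

/-- `Ext¹(A, B)` is a finitely generated (right) `End(A)`-module: there are `n : ℕ` and a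
short exact sequence `0 → B → X → A^n → 0` whose connecting map
`Hom(A, A^n) → Ext¹(A, B)` is surjective, i.e. every extension of `A` by `B` is a pullback
of the fixed one along some `h : A ⟶ A^n`. -/
def Ext1FGEnd (A B : C) : Prop :=
  ∃ (n : ℕ) (X : C) (u : B ⟶ X) (p : X ⟶ ⨁ (fun _ : Fin n => A)),
    IsShortExact u p ∧
    ∀ (E : C) (i : B ⟶ E) (q : E ⟶ A), IsShortExact i q →
      ∃ (h : A ⟶ ⨁ (fun _ : Fin n => A)) (φ : E ⟶ X), i ≫ φ = u ∧ φ ≫ p = q ≫ h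

/-- `∐¹_I f = 0`: for every `I`-indexed family of short exact sequences
`0 → Xᵢ → Yᵢ → fᵢ → 0`, the induced morphism `∐ Xᵢ → ∐ Yᵢ` between (existing)
coproducts is a monomorphism. -/
def CoprodDerivedZeroFam {I : Type v} (f : I → C) : Prop :=
  ∀ (X Y : I → C) (u : ∀ i, X i ⟶ Y i) (p : ∀ i, Y i ⟶ f i),
    (∀ i, IsShortExact (u i) (p i)) →
    ∀ (QX QY : C) (ιX : ∀ i, X i ⟶ QX) (ιY : ∀ i, Y i ⟶ QY) (uu : QX ⟶ QY),
      IsCoproductIn Set.univ X QX ιX → IsCoproductIn Set.univ Y QY ιY →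
      (∀ i, ιX i ≫ uu = u i ≫ ιY i) → Mono uu

/-- `∐¹_I V = 0` for the constant family at `V`. -/
def CoprodDerivedZero (I : Type v) (V : C) : Prop :=
  CoprodDerivedZeroFam (fun _ : I => V)

/-- Witness that the category `D` is `Hom`-finite: a commutative ring `R` together with an
`R`-linear structure on `D` for which all `Hom`-modules are finitely generated. -/
structure HomFiniteStruct (D : Type u) [Category.{v} D] [Preadditive D] :
    Type (max u (v + 1)) where
  R : Type v
  [commRing : CommRing R]
  [linear : CategoryTheory.Linear R D]
  homFinite : ∀ A B : D, Module.Finite R (A ⟶ B)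

/-- The category `D` is `Hom`-finite. -/
def HomFinite (D : Type u) [Category.{v} D] [Preadditive D] : Prop :=
  Nonempty (HomFiniteStruct D)

/-- `Q`, with injections `ι`, is a coproduct of the family `f` in an arbitrary category. -/
def IsCoproductCocone {D : Type u} [Category.{v} D] {I : Type w} (f : I → D) (Q : D)
    (ι : ∀ i, f i ⟶ Q) : Prop :=
  ∀ (Z : D) (g : ∀ i, f i ⟶ Z), ∃! h : Q ⟶ Z, ∀ i, ι i ≫ h = g i

/-- The category `D` satisfies (Ab.4): it has all (small) coproducts, and coproducts
of monomorphisms are monomorphisms (for abelian categories, the latter is equivalent to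
the exactness of coproducts). -/
def Ab4Type (D : Type u) [Category.{v} D] : Prop :=
  HasCoproducts.{v} D ∧
  ∀ (I : Type v) (X Y : I → D) (u : ∀ i, X i ⟶ Y i), (∀ i, Mono (u i)) →
    ∀ (QX QY : D) (ιX : ∀ i, X i ⟶ QX) (ιY : ∀ i, Y i ⟶ QY) (uu : QX ⟶ QY),
      IsCoproductCocone X QX ιX → IsCoproductCocone Y QY ιY →
      (∀ i, ιX i ≫ uu = u i ≫ ιY i) → Mono uu

/-- The category `D` satisfies (Ab.5): it has all (small) coproducts and directed
(filtered) colimits of monomorphisms are monomorphisms (for abelian categories the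
latter is equivalent to the exactness of directed colimits). -/
def Ab5Type (D : Type u) [Category.{v} D] : Prop :=
  HasCoproducts.{v} D ∧
  ∀ (J : Type v) [SmallCategory J] [IsFiltered J] (F G : J ⥤ D) (α : F ⟶ G),
    (∀ j, Mono (α.app j)) →
    ∀ (cF : Cocone F) (cG : Cocone G), IsColimit cF → IsColimit cG →
      ∀ m : cF.pt ⟶ cG.pt, (∀ j, cF.ι.app j ≫ m = α.app j ≫ cG.ι.app j) → Mono m

/-- A ring `S` is left coherent: every finitely generated left ideal is finitely
presented as a left `S`-module. -/
def LeftCoherentRing (S : Type u) [Ring S] : Prop :=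
  ∀ J : Submodule S S, J.FG → Module.FinitePresentation S J

/-- A ring `S` is right coherent: every finitely generated right ideal (i.e. finitely
generated left ideal of `Sᵐᵒᵖ`) is finitely presented as a right `S`-module. -/
def RightCoherentRing (S : Type u) [Ring S] : Prop :=
  ∀ J : Submodule Sᵐᵒᵖ Sᵐᵒᵖ, J.FG → Module.FinitePresentation Sᵐᵒᵖ J

end Paper

/-!
STATEMENT 1 (Corollary `cor.special-preenveloping-arbitraryA`).
-/

namespace Stmt1

open Paper CategoryTheory CategoryTheory.Limits

variable {C : Type u} [Category.{v} C] [Abelian C]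

/-- Assertion (1): `𝒯 = V^{⊥₁}` for an `Ext¹`-universal object `V` such that every
coproduct `V^{(I)}` existing in `𝒜` lies in `V^{⊥₁}`. -/
def A1 (T : Set C) : Prop :=
  ∃ V : C, T = rightPerp Set.univ V ∧ IsExt1UniversalIn Set.univ V ∧
    ∀ (I : Type v) (Q : C) (ι : ∀ _ : I, V ⟶ Q),
      IsCoproductIn Set.univ (fun _ : I => V) Q ι → Ext1Zero V Q

/-- Assertion (2): `𝒯` is special preenveloping and closed under extensions and
direct summands. -/
def A2 (T : Set C) : Prop :=
  SpecialPreenvelopingIn Set.univ T ∧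
  (∀ ⦃A E X : C⦄ (i : A ⟶ E) (p : E ⟶ X),
    IsShortExact i p → A ∈ T → X ∈ T → E ∈ T) ∧
  (∀ ⦃A X : C⦄, X ∈ T → ∀ (s : A ⟶ X) (r : X ⟶ A), s ≫ r = 𝟙 A → A ∈ T)

/-- Assertion (3): `(^{⊥₁}𝒯, 𝒯)` is a right complete cotorsion pair in `𝒜`. -/
def A3 (T : Set C) : Prop :=
  IsCotorsionPairIn Set.univ (leftPerpSet Set.univ T) T ∧
  RightCompleteIn Set.univ (leftPerpSet Set.univ T) T

end Stmt1

/-!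
(1) ⇒ (2): a universal extension `0 → M → X → V^(J) → 0` is a special `V^{⊥₁}`-preenvelope,
since `X ∈ V^{⊥₁}` by the exact sequence `Ext¹(V, M) → Ext¹(V, X) → Ext¹(V, V^(J))`, whose
outer maps vanish. (2) ⇔ (3): for `A ∈ (^{⊥₁}𝒯)^{⊥₁}` the special preenvelope
`0 → A → X → X/A → 0` splits, so `A` is a summand of `X ∈ 𝒯`; conversely the sequences
provided by right completeness are special preenvelopes.

(2) ⇒ (1): let `φ : G → T_G` be a special preenvelope of the epi-generator and `V = coker φ`.
Pushing the monomorphism `φ^(J)` out along an epimorphism `G^(J) → A` gives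
`0 → A → X → V^(J) → 0` with `X` a quotient of `T_G^(J) ∈ 𝒯`; this is a universal extension,
and it splits when `A ∈ V^{⊥₁}`. The coproduct `T_G^(J)` exists because `T_G` is a cokernel of
some `G^(b) → G^(a)` and `G^(a × J)` exists (it is finite or a summand of `G^(a)` or `G^(J)`);
`φ^(J)` is mono because the special preenvelope of `G^(J)` factors through it.
-/

namespace Paper

open CategoryTheory CategoryTheory.Limits

section

variable {C : Type u} [Category.{v} C]

namespace IsCoproductIn

theorem exists_desc {I : Type v} {f : I → C} {Q : C} {ι : ∀ i, f i ⟶ Q}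
    (h : IsCoproductIn Set.univ f Q ι) {Z : C} (g : ∀ i, f i ⟶ Z) :
    ∃ d : Q ⟶ Z, ∀ i, ι i ≫ d = g i :=
  (h.desc Z trivial g).exists

theorem hom_ext {I : Type v} {f : I → C} {Q : C} {ι : ∀ i, f i ⟶ Q}
    (h : IsCoproductIn Set.univ f Q ι) {Z : C} {d d' : Q ⟶ Z}
    (hd : ∀ i, ι i ≫ d = ι i ≫ d') : d = d' :=
  (h.desc Z trivial _).unique hd fun _ => rfl

theorem regroup {S I : Type v} {G Q QS : C} {ι : ∀ _ : S × I, G ⟶ Q} {ιS : ∀ _ : S, G ⟶ QS}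
    (h : IsCoproductIn Set.univ (fun _ : S × I => G) Q ι)
    (hS : IsCoproductIn Set.univ (fun _ : S => G) QS ιS) :
    ∃ J : ∀ _ : I, QS ⟶ Q, IsCoproductIn Set.univ (fun _ : I => QS) Q J := by
  choose J hJ using fun i => hS.exists_desc fun s => ι (s, i)
  refine ⟨J, fun _ => trivial, trivial, fun Z _ g => ?_⟩
  obtain ⟨d, hd⟩ := h.exists_desc fun si => ιS si.1 ≫ g si.2
  exact ⟨d, fun i => hS.hom_ext fun s => by rw [reassoc_of% hJ i s, hd],
    fun y hy => h.hom_ext fun ⟨s, i⟩ => by rw [hd, ← hJ, Category.assoc, hy]⟩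

end IsCoproductIn

theorem mono_of_isPreenvelope_of_isCoproductIn {T : Set C} {G TG : C} {φ : G ⟶ TG}
    (hφ : IsPreenvelope T φ) {J : Type v} {QG P : C} {ιG : ∀ _ : J, G ⟶ QG}
    {κ : ∀ _ : J, TG ⟶ P} (hQG : IsCoproductIn Set.univ (fun _ : J => G) QG ιG)
    (hP : IsCoproductIn Set.univ (fun _ : J => TG) P κ) {φJ : QG ⟶ P}
    (hφJ : ∀ j, ιG j ≫ φJ = φ ≫ κ j) {T' : C} (hT' : T' ∈ T) (ν : QG ⟶ T') [Mono ν] :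
    Mono φJ := by
  choose t ht using fun j => hφ.fac T' hT' (ιG j ≫ ν)
  obtain ⟨τ, hτ⟩ := hP.exists_desc t
  have hφτ : φJ ≫ τ = ν := hQG.hom_ext fun j => by rw [reassoc_of% hφJ, hτ, ht]
  exact mono_of_mono_fac hφτ

end

variable {C : Type u} [Category.{v} C] [Abelian C]

namespace IsShortExact

variable {A E B : C} {i : A ⟶ E} {p : E ⟶ B}

theorem w (h : IsShortExact i p) : i ≫ p = 0 := h.1

theorem shortExact (h : IsShortExact i p) : (ShortComplex.mk i p h.w).ShortExact := h.2

theorem mono (h : IsShortExact i p) : Mono i := h.shortExact.mono_f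

theorem epi (h : IsShortExact i p) : Epi p := h.shortExact.epi_g

theorem exists_lift (h : IsShortExact i p) {Z : C} (z : Z ⟶ E) (hz : z ≫ p = 0) :
    ∃ m : Z ⟶ A, m ≫ i = z :=
  have := h.mono
  h.shortExact.exact.lift' z hz

theorem exists_desc (h : IsShortExact i p) {Z : C} (t : E ⟶ Z) (ht : i ≫ t = 0) :
    ∃ s : B ⟶ Z, p ≫ s = t :=
  have := h.epi
  h.shortExact.exact.desc' t ht

theorem of_lift (hi : Mono i) (hp : Epi p) (hw : i ≫ p = 0)
    (hlift : ∀ {Z : C} (z : Z ⟶ E), z ≫ p = 0 → ∃ m : Z ⟶ A, m ≫ i = z) :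
    IsShortExact i p :=
  ⟨hw, .mk' ((ShortComplex.mk i p hw).exact_of_f_is_kernel
    (KernelFork.IsLimit.ofι' i hw fun z hz => ⟨_, (hlift z hz).choose_spec⟩)) hi hp⟩

theorem of_desc (hi : Mono i) (hp : Epi p) (hw : i ≫ p = 0)
    (hdesc : ∀ {Z : C} (t : E ⟶ Z), i ≫ t = 0 → ∃ s : B ⟶ Z, p ≫ s = t) :
    IsShortExact i p :=
  ⟨hw, .mk' ((ShortComplex.mk i p hw).exact_of_g_is_cokernel
    (CokernelCofork.IsColimit.ofπ' p hw fun t ht => ⟨_, (hdesc t ht).choose_spec⟩)) hi hp⟩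

theorem exists_section_of_retraction (h : IsShortExact i p) {r : E ⟶ A} (hr : i ≫ r = 𝟙 A) :
    ∃ s : B ⟶ E, s ≫ p = 𝟙 B :=
  ⟨_, (ShortComplex.Splitting.ofExactOfRetraction _ h.shortExact.exact r hr h.epi).s_g⟩

theorem exists_retraction_of_section (h : IsShortExact i p) {s : B ⟶ E} (hs : s ≫ p = 𝟙 B) :
    ∃ r : E ⟶ A, i ≫ r = 𝟙 A :=
  ⟨_, (ShortComplex.Splitting.ofExactOfSection _ h.shortExact.exact s hs h.mono).f_r⟩

theorem pushout (h : IsShortExact i p) {X : C} (f : A ⟶ X) :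
    IsShortExact (pushout.inr i f) (pushout.desc p 0 (by rw [h.w, comp_zero])) := by
  have := h.mono
  have := h.epi
  refine of_desc inferInstance (epi_of_epi_fac (pushout.inl_desc _ _ _))
    (pushout.inr_desc _ _ _) fun t ht => ?_
  obtain ⟨s, hs⟩ := h.exists_desc (pushout.inl i f ≫ t)
    (by rw [pushout.condition_assoc, ht, comp_zero])
  exact ⟨s, pushout.hom_ext (by rw [pushout.inl_desc_assoc, hs])
    (by rw [pushout.inr_desc_assoc, zero_comp, ht])⟩

theorem pullback (h : IsShortExact i p) {B' : C} (f : B' ⟶ B) :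
    IsShortExact (pullback.lift i 0 (by rw [h.w, zero_comp])) (pullback.snd p f) := by
  have := h.mono
  have := h.epi
  refine of_lift (mono_of_mono_fac (pullback.lift_fst _ _ _)) inferInstance
    (pullback.lift_snd _ _ _) fun z hz => ?_
  obtain ⟨m, hm⟩ := h.exists_lift (z ≫ pullback.fst p f)
    (by rw [Category.assoc, pullback.condition, reassoc_of% hz, zero_comp])
  exact ⟨m, pullback.hom_ext (by rw [Category.assoc, pullback.lift_fst, hm])
    (by rw [Category.assoc, pullback.lift_snd, comp_zero, hz])⟩

noncomputable def cokernelIso (h : IsShortExact i p) : cokernel i ≅ B :=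
  (colimit.isColimit _).coconePointUniqueUpToIso h.shortExact.gIsCokernel

end IsShortExact

theorem isShortExact_cokernel {A E : C} (φ : A ⟶ E) [Mono φ] :
    IsShortExact φ (cokernel.π φ) :=
  ⟨cokernel.condition φ,
    .mk' (ShortComplex.exact_of_g_is_cokernel _ (cokernelIsCokernel φ)) inferInstance inferInstance⟩

theorem isShortExact_kernel {E B : C} (p : E ⟶ B) [Epi p] :
    IsShortExact (kernel.ι p) p :=
  ⟨kernel.condition p,
    .mk' (ShortComplex.exact_of_f_is_kernel _ (kernelIsKernel p)) inferInstance inferInstance⟩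

namespace Ext1Zero

theorem exists_retraction {X Y E : C} {i : Y ⟶ E} {p : E ⟶ X} (h : Ext1Zero X Y)
    (hip : IsShortExact i p) : ∃ r : E ⟶ Y, i ≫ r = 𝟙 Y :=
  h E trivial i p hip

theorem exists_extension {A E B Y : C} {i : A ⟶ E} {p : E ⟶ B} (h : Ext1Zero B Y)
    (hip : IsShortExact i p) (g : A ⟶ Y) : ∃ e : E ⟶ Y, i ≫ e = g := by
  obtain ⟨ρ, hρ⟩ := h.exists_retraction (hip.pushout g)
  exact ⟨pushout.inl i g ≫ ρ, by rw [pushout.condition_assoc, hρ, Category.comp_id]⟩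

theorem exists_lift {A E B X : C} {i : A ⟶ E} {p : E ⟶ B} (h : Ext1Zero X A)
    (hip : IsShortExact i p) (g : X ⟶ B) : ∃ l : X ⟶ E, l ≫ p = g := by
  obtain ⟨r, hr⟩ := h.exists_retraction (hip.pullback g)
  obtain ⟨s, hs⟩ := (hip.pullback g).exists_section_of_retraction hr
  exact ⟨s ≫ pullback.fst p g, by rw [Category.assoc, pullback.condition, reassoc_of% hs]⟩

theorem of_iso {B₁ B₂ Y : C} (e : B₁ ≅ B₂) (h : Ext1Zero B₂ Y) : Ext1Zero B₁ Y :=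
  fun E _ j q hjq => h E trivial j (q ≫ e.hom) ⟨by rw [reassoc_of% hjq.w, zero_comp],
    ShortComplex.shortExact_of_iso
      (ShortComplex.isoMk (S₁ := .mk j q hjq.w) (Iso.refl _) (Iso.refl _) e) hjq.shortExact⟩

theorem of_retract {Z A X : C} (h : Ext1Zero Z X) (s : A ⟶ X) (r : X ⟶ A)
    (hsr : s ≫ r = 𝟙 A) : Ext1Zero Z A := fun E _ i q hiq => by
  obtain ⟨e, he⟩ := h.exists_extension hiq s
  exact ⟨e ≫ r, by rw [reassoc_of% he, hsr]⟩

end Ext1Zero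

theorem ext1Zero_of_isCoproductIn {J : Type v} {f : J → C} {P A : C} {κ : ∀ j, f j ⟶ P}
    (hP : IsCoproductIn Set.univ f P κ) (h : ∀ j, Ext1Zero (f j) A) : Ext1Zero P A := by
  intro E _ i p hip
  choose l hl using fun j => (h j).exists_lift hip (κ j)
  obtain ⟨σ, hσ⟩ := hP.exists_desc l
  exact hip.exists_retraction_of_section (s := σ) <| hP.hom_ext fun j => by
    rw [reassoc_of% hσ j, hl, Category.comp_id]

/-- `Ext¹(V, u) = 0`: the pushout along `u` of every extension of `V` by `M` splits. -/
def Ext1MapZero (V : C) {M X : C} (u : M ⟶ X) : Prop :=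
  ∀ (E : C) (i : M ⟶ E) (q : E ⟶ V), IsShortExact i q → ∃ ψ : E ⟶ X, i ≫ ψ = u

theorem Ext1Zero.ext1MapZero {V M X : C} (h : Ext1Zero V M) (u : M ⟶ X) : Ext1MapZero V u :=
  fun _ _ _ hiq =>
    let ⟨r, hr⟩ := h.exists_retraction hiq
    ⟨r ≫ u, by rw [reassoc_of% hr]⟩

/-- `j ≫ t = p` says that the pushout of `0 → X → E → V → 0` along `p` splits. -/
theorem isShortExact_kernel_lift {M X P E V : C} {u : M ⟶ X} {p : X ⟶ P} {j : X ⟶ E}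
    {q : E ⟶ V} (hup : IsShortExact u p) (hjq : IsShortExact j q) {t : E ⟶ P} (hjt : j ≫ t = p) :
    IsShortExact (kernel.lift t (u ≫ j) (by rw [Category.assoc, hjt, hup.w]))
      (kernel.ι t ≫ q) := by
  have := hup.mono
  have := hup.epi
  have := hjq.mono
  have := hjq.epi
  have : Epi t := epi_of_epi_fac hjt
  refine .of_lift (mono_of_mono_fac (kernel.lift_ι _ _ _)) ?_ (by simp [hjq.w]) fun z hz => ?_
  · refine Preadditive.epi_of_cancel_zero _ fun g hg => ?_
    obtain ⟨h, hh⟩ := (isShortExact_kernel t).exists_desc (q ≫ g) (by simpa using hg)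
    obtain rfl : h = 0 := (cancel_epi p).1 (by
      rw [comp_zero, ← hjt, Category.assoc, hh, reassoc_of% hjq.w, zero_comp])
    rw [← cancel_epi q, ← hh, comp_zero, comp_zero]
  · obtain ⟨x, hx⟩ := hjq.exists_lift (z ≫ kernel.ι t) (by simpa using hz)
    obtain ⟨m, hm⟩ := hup.exists_lift x
      (by rw [← hjt, reassoc_of% hx, kernel.condition, comp_zero])
    exact ⟨m, by
      rw [← cancel_mono (kernel.ι t), Category.assoc, kernel.lift_ι, reassoc_of% hm, hx]⟩

/-- Exactness of `Ext¹(V, M) → Ext¹(V, X) → Ext¹(V, P)` at the middle term: the outer maps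
vanish, so the middle term does. -/
theorem ext1Zero_of_ext1MapZero {V M X P : C} {u : M ⟶ X} {p : X ⟶ P}
    (hup : IsShortExact u p) (hP : Ext1Zero V P) (hu : Ext1MapZero V u) : Ext1Zero V X := by
  intro E _ j q hjq
  obtain ⟨t, hjt⟩ := hP.exists_extension hjq p
  have hK := isShortExact_kernel_lift hup hjq hjt
  obtain ⟨ψ, hψ⟩ := hu _ _ _ hK
  obtain ⟨s, hs⟩ := hK.exists_desc (kernel.ι t - ψ ≫ j) (by simp [reassoc_of% hψ])
  have := hK.epi
  refine hjq.exists_retraction_of_section (s := s) ?_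
  rw [← cancel_epi (kernel.ι t ≫ q), Category.assoc, reassoc_of% hs]
  simp [hjq.w]

theorem Ext1Zero.of_isShortExact {Z A E X : C} {i : A ⟶ E} {p : E ⟶ X}
    (hip : IsShortExact i p) (hA : Ext1Zero Z A) (hX : Ext1Zero Z X) : Ext1Zero Z E :=
  ext1Zero_of_ext1MapZero hip hX (hA.ext1MapZero i)

theorem isSpecialPreenvelopeIn_of_isShortExact {T : Set C} {M Y X : C} {i : M ⟶ Y}
    {p : Y ⟶ X} (hip : IsShortExact i p) (hY : Y ∈ T) (hX : ∀ T' ∈ T, Ext1Zero X T') :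
    IsSpecialPreenvelopeIn Set.univ T i :=
  ⟨hip.mono, ⟨hY, fun T' hT' g => (hX T' hT').exists_extension hip g⟩,
    trivial, fun T' hT' => (hX T' hT').of_iso hip.cokernelIso⟩

namespace IsCoproductIn

variable {G : C}

theorem option {I : Type v} {Q : C} {ι : ∀ _ : I, G ⟶ Q}
    (h : IsCoproductIn Set.univ (fun _ : I => G) Q ι) :
    IsCoproductIn Set.univ (fun _ : Option I => G) (Q ⊞ G)
      (fun o => o.elim biprod.inr fun i => ι i ≫ biprod.inl) := by
  refine ⟨fun _ => trivial, trivial, fun Z _ g => ?_⟩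
  obtain ⟨d, hd⟩ := h.exists_desc fun i => g (some i)
  refine ⟨biprod.desc d (g none), fun o => ?_, fun y hy => ?_⟩
  · cases o <;> simp [hd]
  · ext
    · exact h.hom_ext fun i => by simpa [hd] using hy (some i)
    · simpa using hy none

theorem exists_of_embedding {I K : Type v} {Q : C} {ι : ∀ _ : I, G ⟶ Q}
    (h : IsCoproductIn Set.univ (fun _ : I => G) Q ι) (e : K ↪ I) :
    ∃ (Q' : C) (ι' : ∀ _ : K, G ⟶ Q'), IsCoproductIn Set.univ (fun _ : K => G) Q' ι' := by
  -- `Q'` is `Q` with the summands outside the range of `e` killed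
  obtain ⟨c, hc⟩ := h.exists_desc (Function.extend e (fun _ => 0) ι)
  have hoff : ∀ i, (¬∃ k, e k = i) → ι i ≫ cokernel.π c = 0 := fun i hi => by
    rw [← Function.extend_apply' (fun _ => 0) ι i hi, ← hc, Category.assoc, cokernel.condition,
      comp_zero]
  refine ⟨cokernel c, fun k => ι (e k) ≫ cokernel.π c, fun _ => trivial, trivial,
    fun Z _ g => ?_⟩
  obtain ⟨d, hd⟩ := h.exists_desc (Function.extend e g 0)
  have hcd : c ≫ d = 0 := h.hom_ext fun i => by
    by_cases hi : ∃ k, e k = i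
    · obtain ⟨k, rfl⟩ := hi
      rw [reassoc_of% hc, e.injective.extend_apply, zero_comp, comp_zero]
    · rw [reassoc_of% hc, Function.extend_apply' _ _ _ hi, hd, Function.extend_apply' _ _ _ hi,
        comp_zero, Pi.zero_apply]
  refine ⟨cokernel.desc c d hcd, fun k => by simp [hd, e.injective.extend_apply], fun y hy => ?_⟩
  rw [← cancel_epi (cokernel.π c), cokernel.π_desc]
  refine h.hom_ext fun i => ?_
  by_cases hi : ∃ k, e k = i
  · obtain ⟨k, rfl⟩ := hi
    rw [hd, e.injective.extend_apply, ← Category.assoc, hy k]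
  · rw [reassoc_of% (hoff i hi), hd, Function.extend_apply' _ _ _ hi, Pi.zero_apply, zero_comp]

end IsCoproductIn

theorem exists_isCoproductIn_of_finite (K : Type v) [Finite K] (G : C) :
    ∃ (Q : C) (ι : ∀ _ : K, G ⟶ Q), IsCoproductIn Set.univ (fun _ : K => G) Q ι :=
  ⟨⨁ fun _ : K => G, biproduct.ι _, fun _ => trivial, trivial, fun _ _ g =>
    ⟨biproduct.desc g, fun _ => biproduct.ι_desc _ _, fun _ hy => biproduct.hom_ext' _ _
      fun k => by rw [hy, biproduct.ι_desc]⟩⟩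

open Cardinal in
/-- `#(S × I) ≤ max #S #I` unless `S × I` is finite. -/
theorem exists_isCoproductIn_prod {S I : Type v} {G QS QI : C} {ιS : ∀ _ : S, G ⟶ QS}
    {ιI : ∀ _ : I, G ⟶ QI} (hS : IsCoproductIn Set.univ (fun _ : S => G) QS ιS)
    (hI : IsCoproductIn Set.univ (fun _ : I => G) QI ιI) :
    ∃ (Q : C) (ι : ∀ _ : S × I, G ⟶ Q), IsCoproductIn Set.univ (fun _ : S × I => G) Q ι := by
  rcases finite_or_infinite (S × I) with hfin | hinf
  · exact exists_isCoproductIn_of_finite _ G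
  have hmax : #(S × I) ≤ max #S #I := by
    rw [mk_prod, lift_id, lift_id]
    rcases infinite_prod.1 hinf with ⟨hS', -⟩ | ⟨-, hI'⟩
    · exact mul_le_max_of_aleph0_le_left (infinite_iff.1 hS')
    · exact mul_le_max_of_aleph0_le_right (infinite_iff.1 hI')
  rcases le_max_iff.1 hmax with hle | hle
  · exact hS.exists_of_embedding ((le_def _ _).1 hle).some
  · exact hI.exists_of_embedding ((le_def _ _).1 hle).some

theorem exists_isCoproductIn_coprod {S I : Type v} {G QS QI : C} {ιS : ∀ _ : S, G ⟶ QS}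
    {ιI : ∀ _ : I, G ⟶ QI} (hS : IsCoproductIn Set.univ (fun _ : S => G) QS ιS)
    (hI : IsCoproductIn Set.univ (fun _ : I => G) QI ιI) :
    ∃ (Q : C) (J : ∀ _ : I, QS ⟶ Q), IsCoproductIn Set.univ (fun _ : I => QS) Q J := by
  obtain ⟨Q, ι, h⟩ := exists_isCoproductIn_prod hS hI
  exact ⟨Q, h.regroup hS⟩

theorem isCoproductIn_cokernel {I : Type v} {X Y Z : I → C} {f : ∀ i, X i ⟶ Y i}
    {π : ∀ i, Y i ⟶ Z i} {w : ∀ i, f i ≫ π i = 0}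
    (hπ : ∀ i, IsColimit (CokernelCofork.ofπ (π i) (w i))) {QX QY : C} {ιX : ∀ i, X i ⟶ QX}
    {ιY : ∀ i, Y i ⟶ QY} (hX : IsCoproductIn Set.univ X QX ιX)
    (hY : IsCoproductIn Set.univ Y QY ιY) {fQ : QX ⟶ QY} (hf : ∀ i, ιX i ≫ fQ = f i ≫ ιY i) :
    ∃ κ : ∀ i, Z i ⟶ cokernel fQ, (∀ i, π i ≫ κ i = ιY i ≫ cokernel.π fQ) ∧
      IsCoproductIn Set.univ Z (cokernel fQ) κ := by
  have hκ : ∀ i, f i ≫ ιY i ≫ cokernel.π fQ = 0 := fun i => by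
    rw [← reassoc_of% hf, cokernel.condition, comp_zero]
  have hdesc : ∀ i, ∃ l : Z i ⟶ cokernel fQ, π i ≫ l = ιY i ≫ cokernel.π fQ := fun i =>
    ⟨_, (CokernelCofork.IsColimit.desc' (hπ i) _ (hκ i)).2⟩
  choose κ hκπ using hdesc
  refine ⟨κ, hκπ, fun _ => trivial, trivial, fun W _ g => ?_⟩
  obtain ⟨d, hd⟩ := hY.exists_desc fun i => π i ≫ g i
  have hfd : fQ ≫ d = 0 := hX.hom_ext fun i => by
    rw [reassoc_of% hf, hd, reassoc_of% w, zero_comp, comp_zero]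
  refine ⟨cokernel.desc fQ d hfd, fun i => Cofork.IsColimit.hom_ext (hπ i) ?_, fun y hy => ?_⟩
  · change π i ≫ κ i ≫ _ = π i ≫ g i
    rw [reassoc_of% hκπ, cokernel.π_desc, hd]
  · rw [← cancel_epi (cokernel.π fQ), cokernel.π_desc]
    exact hY.hom_ext fun i => by rw [← reassoc_of% hκπ, hy, hd]

theorem IsEpiGeneratorIn.exists_isCoproductIn {G : C} (hG : IsEpiGeneratorIn Set.univ G)
    {J : Type v} {QJ : C} {ιJ : ∀ _ : J, G ⟶ QJ}
    (hJ : IsCoproductIn Set.univ (fun _ : J => G) QJ ιJ) (Y : C) :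
    ∃ (P : C) (κ : ∀ _ : J, Y ⟶ P), IsCoproductIn Set.univ (fun _ : J => Y) P κ := by
  obtain ⟨a, Ga, ιa, hGa, ε, hε⟩ := hG.2 Y trivial
  obtain ⟨b, Gb, ιb, hGb, δ, hδ⟩ := hG.2 (kernel ε) trivial
  obtain ⟨QA, JA, hQA⟩ := exists_isCoproductIn_coprod hGa hJ
  obtain ⟨QB, JB, hQB⟩ := exists_isCoproductIn_coprod hGb hJ
  obtain ⟨wJ, hwJ⟩ := hQB.exists_desc fun j => (δ ≫ kernel.ι ε) ≫ JA j
  -- `Y` is the cokernel of `G^(b) → G^(a)`, so `Y^(J)` is the cokernel of `wJ`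
  have hc := isCokernelEpiComp (Abelian.epiIsCokernelOfKernel _ (kernelIsKernel ε)) δ rfl
  obtain ⟨κ, -, hκ⟩ := isCoproductIn_cokernel (fun _ => hc) hQB hQA hwJ
  exact ⟨_, κ, hκ⟩

end Paper

namespace Stmt1

open Paper CategoryTheory CategoryTheory.Limits

variable {C : Type u} [Category.{v} C] [Abelian C]

theorem rightPerp_eq_rightPerpSet_singleton (V : C) :
    rightPerp Set.univ V = rightPerpSet Set.univ {V} := by
  ext A
  simp [rightPerp, rightPerpSet]

theorem a2_of_eq_rightPerpSet {T 𝒵 : Set C} (hT : T = rightPerpSet Set.univ 𝒵)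
    (hpre : SpecialPreenvelopingIn Set.univ T) : A2 T := by
  subst hT
  exact ⟨hpre,
    fun _ _ _ _ _ hip hA hX =>
      ⟨trivial, fun Z hZ => Ext1Zero.of_isShortExact hip (hA.2 Z hZ) (hX.2 Z hZ)⟩,
    fun _ _ hX s r hsr => ⟨trivial, fun Z hZ => Ext1Zero.of_retract (hX.2 Z hZ) s r hsr⟩⟩

theorem a2_of_a1 {T : Set C} (h : A1 T) : A2 T := by
  obtain ⟨V, hT, hV, hcoprod⟩ := h
  refine a2_of_eq_rightPerpSet (hT.trans (rightPerp_eq_rightPerpSet_singleton V)) fun M _ => ?_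
  obtain ⟨X, u, -, -, ⟨J, -, P, κ, p, hP, hup⟩, hu⟩ := hV M trivial
  refine ⟨X, u, isSpecialPreenvelopeIn_of_isShortExact hup ?_ fun T' hT' => ?_⟩
  · rw [hT]
    exact ⟨trivial, ext1Zero_of_ext1MapZero hup (hcoprod J P κ hP) fun E => hu E trivial⟩
  · rw [hT] at hT'
    exact ext1Zero_of_isCoproductIn hP fun _ => hT'.2

theorem a3_of_a2 {T : Set C} (h : A2 T) : A3 T := by
  obtain ⟨hpre, -, hsummand⟩ := h
  refine ⟨⟨Set.ext fun A => ⟨fun hA => ⟨trivial, fun Z hZ => hZ.2 A hA⟩, fun ⟨_, hA⟩ => ?_⟩, rfl⟩,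
    fun A _ => ?_⟩
  · obtain ⟨X, φ, hφ, hφpre, hφcoker⟩ := hpre A trivial
    obtain ⟨r, hr⟩ := hA _ hφcoker X trivial φ _ (isShortExact_cokernel φ)
    exact hsummand hφpre.mem φ r hr
  · obtain ⟨X, φ, hφ, hφpre, hφcoker⟩ := hpre A trivial
    exact ⟨X, _, φ, _, hφpre.mem, hφcoker, isShortExact_cokernel φ⟩

theorem a2_of_a3 {T : Set C} (h : A3 T) : A2 T := by
  obtain ⟨⟨hT, -⟩, hcompl⟩ := h
  refine a2_of_eq_rightPerpSet (𝒵 := leftPerpSet Set.univ T) hT fun M _ => ?_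
  obtain ⟨Y, X, i, p, hY, hX, hip⟩ := hcompl M trivial
  exact ⟨Y, i, isSpecialPreenvelopeIn_of_isShortExact hip hY hX.2⟩

/-- `X` is the pushout of the monomorphism `φ^(J)` along an epimorphism `G^(J) → A`. -/
theorem exists_isShortExact_coprod_cokernel {T : Set C} {G TG : C}
    (hG : IsEpiGeneratorIn Set.univ G)
    (hcop : ∀ (I : Type v) (g : I → C) (Q : C) (ι : ∀ i, g i ⟶ Q),
        (∀ i, g i ∈ T) → IsCoproductIn Set.univ g Q ι → Q ∈ T)
    (hquot : ∀ ⦃A Q : C⦄, A ∈ T → ∀ p : A ⟶ Q, Epi p → Q ∈ T)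
    (hpre : SpecialPreenvelopingIn Set.univ T) {φ : G ⟶ TG} (hφ : IsPreenvelope T φ) (A : C) :
    ∃ (J : Type v) (_ : Nonempty J) (P : C) (κ : ∀ _ : J, cokernel φ ⟶ P) (X : C) (u : A ⟶ X)
      (p : X ⟶ P), IsCoproductIn Set.univ (fun _ : J => cokernel φ) P κ ∧ IsShortExact u p ∧
        X ∈ T := by
  obtain ⟨I₀, Q₀, ι₀, hQ₀, ε₀, hε₀⟩ := hG.2 A trivial
  have hQG := hQ₀.option
  have : Epi (biprod.desc ε₀ (0 : G ⟶ A)) := epi_of_epi_fac (biprod.inl_desc ε₀ 0)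
  obtain ⟨P, κ, hP⟩ := hG.exists_isCoproductIn hQG TG
  obtain ⟨φJ, hφJ⟩ := hQG.exists_desc fun j => φ ≫ κ j
  obtain ⟨T', ν, hν, hνpre, -⟩ := hpre (Q₀ ⊞ G) trivial
  have : Mono φJ := mono_of_isPreenvelope_of_isCoproductIn hφ hQG hP hφJ hνpre.mem ν
  obtain ⟨κQ, -, hκQ⟩ := isCoproductIn_cokernel (w := fun _ => cokernel.condition φ)
    (fun _ => cokernelIsCokernel φ) hQG hP hφJ
  exact ⟨Option I₀, ⟨none⟩, _, κQ, _, _, _, hκQ,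
    (isShortExact_cokernel φJ).pushout (biprod.desc ε₀ 0),
    hquot (hcop _ _ P κ (fun _ => hφ.mem) hP) (pushout.inl _ _) inferInstance⟩

theorem a1_of_a2 {T : Set C} (hG : ∃ G : C, IsEpiGeneratorIn Set.univ G)
    (hcop : ∀ (I : Type v) (g : I → C) (Q : C) (ι : ∀ i, g i ⟶ Q),
        (∀ i, g i ∈ T) → IsCoproductIn Set.univ g Q ι → Q ∈ T)
    (hquot : ∀ ⦃A Q : C⦄, A ∈ T → ∀ p : A ⟶ Q, Epi p → Q ∈ T) (h : A2 T) : A1 T := by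
  obtain ⟨G, hG⟩ := hG
  obtain ⟨hpre, -, hsummand⟩ := h
  obtain ⟨TG, φ, -, hφ, -, hφcoker⟩ := hpre G trivial
  have hseq := exists_isShortExact_coprod_cokernel hG hcop hquot hpre hφ
  have hQ : cokernel φ ∈ T := hquot hφ.mem _ (inferInstance : Epi (cokernel.π φ))
  refine ⟨cokernel φ, Set.ext fun A => ⟨fun hA => ⟨trivial, hφcoker A hA⟩, fun ⟨_, hA⟩ => ?_⟩,
    fun A _ => ?_, fun I P κ hP => hφcoker P (hcop _ _ P κ (fun _ => hQ) hP)⟩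
  · obtain ⟨J, -, P, κ, X, u, p, hP, hup, hX⟩ := hseq A
    obtain ⟨r, hr⟩ := (ext1Zero_of_isCoproductIn hP fun _ => hA).exists_retraction hup
    exact hsummand hX u r hr
  · obtain ⟨J, hJ, P, κ, X, u, p, hP, hup, hX⟩ := hseq A
    exact ⟨X, u, trivial, trivial, ⟨J, hJ, P, κ, p, hP, hup⟩,
      fun E _ i q hiq => Ext1Zero.exists_extension (hφcoker X hX) hiq u⟩

theorem statement1 (T : Set C) :
    ((A1 T → A2 T) ∧ (A2 T ↔ A3 T)) ∧
    -- If `𝒜` has an epi-generator and `𝒯` is closed under coproducts and quotients,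
    -- then all three assertions are equivalent:
    ((∃ G : C, IsEpiGeneratorIn Set.univ G) →
     (∀ (I : Type v) (g : I → C) (Q : C) (ι : ∀ i, g i ⟶ Q),
        (∀ i, g i ∈ T) → IsCoproductIn Set.univ g Q ι → Q ∈ T) →
     (∀ ⦃A Q : C⦄, A ∈ T → ∀ p : A ⟶ Q, Epi p → Q ∈ T) →
     (A2 T → A1 T)) :=
  ⟨⟨a2_of_a1, a3_of_a2, a2_of_a3⟩, a1_of_a2⟩

end Stmt1
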